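/- arXiv:2201.02972 — 4 statements merged into one kernel-verified Lean document; each statement's English description precedes it below -/
import Mathlib

section
/- Let U, V, W be independent exponential random variables with means β₁ > 0, β₂ > 0, β₃ > 0 respectively, and let c₁ > 0, c₂ ≥ 0, c₃ ≥ 0 be constants. Then P(U ≥ c₁·V² + c₂·W + c₃) = [β₁ / (2β₂(β₁ + c₂·β₃))] · √(πβ₁/c₁) · exp(β₁/(4β₂²c₁) − c₃/β₁) · erfc((1/(2β₂))·√(β₁/c₁)), where erfc(z) = (2/√π)·∫_z^∞ exp(−t²) dt. -/
/-!
Since `U` is exponential with rate `1/β₁` and independent of `X = c₁V² + c₂W + c₃ ≥ 0`,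
`P(X ≤ U) = E[exp(-X/β₁)]`, which by independence of `V` and `W` splits into
`E[exp(-(c₁/β₁)V²)] · E[exp(-(c₂/β₁)W)] · exp(-c₃/β₁)`. The second factor is the Laplace
transform `β₁/(β₁ + c₂β₃)` of an exponential law; in the first, completing the square in
`∫₀^∞ exp(-v/β₂ - (c₁/β₁)v²) dv` leaves a Gaussian tail integral, i.e. a value of `erfc`.
-/

open MeasureTheory ProbabilityTheory Real

noncomputable def erfc (z : ℝ) : ℝ :=
  2 / Real.sqrt π * ∫ t in Set.Ioi z, Real.exp (-t ^ 2)

open Set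
open scoped ENNReal

lemma integral_comp_add_right_Ioi {E : Type*} [NormedAddCommGroup E] [NormedSpace ℝ E]
    (g : ℝ → E) (a d : ℝ) : ∫ x in Ioi a, g (x + d) = ∫ x in Ioi (a + d), g x := by
  simpa using (measurePreserving_add_right volume d).setIntegral_preimage_emb
    (measurableEmbedding_addRight d) g (Ioi (a + d))

lemma integral_Ioi_exp_neg_mul_sq {a : ℝ} (ha : 0 < a) (s : ℝ) :
    ∫ u in Ioi s, exp (-(a * u ^ 2)) = √(π / a) / 2 * erfc (√a * s) := by
  have hsa : 0 < √a := sqrt_pos.mpr ha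
  have h := integral_comp_mul_left_Ioi (fun t => exp (-t ^ 2)) s hsa
  simp only [smul_eq_mul, mul_pow, sq_sqrt ha.le] at h
  rw [h, erfc, sqrt_div' _ ha.le]
  field_simp

lemma ae_nonneg_expMeasure (r : ℝ) : ∀ᵐ x ∂expMeasure r, 0 ≤ x := by
  rw [ae_iff]
  simp only [not_le]
  exact (withDensity_apply _ measurableSet_Iio).trans (lintegral_exponentialPDF_of_nonpos le_rfl)

lemma expMeasure_Ici {r : ℝ} (hr : 0 < r) {x : ℝ} (hx : 0 ≤ x) :
    expMeasure r (Ici x) = ENNReal.ofReal (exp (-(r * x))) := by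
  have := isProbabilityMeasure_expMeasure hr
  have hac : expMeasure r ≪ volume := withDensity_absolutelyContinuous _ _
  rw [← measure_congr (hac.ae_eq Ioi_ae_eq_Ici), ← compl_Iic,
    prob_compl_eq_one_sub measurableSet_Iic, ← ofReal_cdf, cdf_expMeasure_eq hr, if_pos hx,
    ← ENNReal.ofReal_one, ← ENNReal.ofReal_sub _ (sub_nonneg.mpr (exp_le_one_iff.mpr
      (neg_nonpos.mpr (mul_nonneg hr.le hx)))), sub_sub_cancel]

lemma lintegral_ofReal_expMeasure {r : ℝ} (hr : 0 ≤ r) {g : ℝ → ℝ} (hg : Measurable g)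
    (hg0 : 0 ≤ g) (hint : IntegrableOn (fun x => r * exp (-(r * x)) * g x) (Ioi 0)) :
    ∫⁻ x, ENNReal.ofReal (g x) ∂expMeasure r
      = ENNReal.ofReal (∫ x in Ioi 0, r * exp (-(r * x)) * g x) := by
  have hpdf : Measurable (exponentialPDF r) := (measurable_exponentialPDFReal r).ennreal_ofReal
  have hmul : exponentialPDF r * (fun x => ENNReal.ofReal (g x))
      = (Ici 0).indicator fun x => ENNReal.ofReal (r * exp (-(r * x)) * g x) := by
    ext x
    by_cases hx : 0 ≤ x
    · simp [hx, exponentialPDF_of_nonneg, ENNReal.ofReal_mul (mul_nonneg hr (exp_pos _).le)]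
    · simp [hx, exponentialPDF_of_neg (not_le.mp hx)]
  rw [ofReal_integral_eq_lintegral_ofReal hint
      (ae_of_all _ fun x => mul_nonneg (mul_nonneg hr (exp_pos _).le) (hg0 x)),
    setLIntegral_congr Ioi_ae_eq_Ici, ← lintegral_indicator measurableSet_Ici, ← hmul,
    ← lintegral_withDensity_eq_lintegral_mul _ hpdf hg.ennreal_ofReal]
  rfl

lemma lintegral_exp_neg_mul_expMeasure {r b : ℝ} (hr : 0 ≤ r) (hrb : 0 < r + b) :
    ∫⁻ x, ENNReal.ofReal (exp (-(b * x))) ∂expMeasure r = ENNReal.ofReal (r / (r + b)) := by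
  have hdensity : ∀ x, r * exp (-(r * x)) * exp (-(b * x)) = r * exp (-(r + b) * x) :=
    fun x => by rw [mul_assoc, ← exp_add]; ring_nf
  have hint : IntegrableOn (fun x => r * exp (-(r + b) * x)) (Ioi 0) := by
    simpa only [neg_mul, IntegrableOn] using (exp_neg_integrableOn_Ioi 0 hrb).const_mul r
  rw [lintegral_ofReal_expMeasure hr (by fun_prop) (fun x => (exp_pos _).le)
    (by simpa only [hdensity] using hint)]
  simp_rw [hdensity]
  rw [integral_const_mul, integral_exp_mul_Ioi (neg_lt_zero.mpr hrb), mul_zero, exp_zero]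
  congr 1
  field_simp

lemma lintegral_exp_neg_mul_sq_expMeasure {r a : ℝ} (hr : 0 ≤ r) (ha : 0 < a) :
    ∫⁻ x, ENNReal.ofReal (exp (-(a * x ^ 2))) ∂expMeasure r
      = ENNReal.ofReal (r * exp (r ^ 2 / (4 * a)) * (√(π / a) / 2) * erfc (r / (2 * √a))) := by
  set s := r / (2 * a) with hs
  have hsq : ∀ x, r * exp (-(r * x)) * exp (-(a * x ^ 2))
      = r * exp (r ^ 2 / (4 * a)) * exp (-(a * (x + s) ^ 2)) := fun x => by
    rw [mul_assoc, mul_assoc, ← exp_add, ← exp_add]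
    congr 2
    rw [hs]
    field_simp
    ring
  have hint : Integrable fun x => exp (-(a * (x + s) ^ 2)) := by
    simpa only [neg_mul] using (integrable_exp_neg_mul_sq ha).comp_add_right s
  rw [lintegral_ofReal_expMeasure hr (by fun_prop) (fun x => (exp_pos _).le)
    (by simpa only [hsq] using (hint.const_mul _).integrableOn)]
  simp_rw [hsq]
  rw [integral_const_mul, integral_comp_add_right_Ioi (fun u => exp (-(a * u ^ 2))), zero_add,
    integral_Ioi_exp_neg_mul_sq ha, ← mul_assoc]
  congr 3
  have hsa : 0 < √a := sqrt_pos.mpr ha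
  rw [hs]
  field_simp
  rw [sq_sqrt ha.le, mul_comm]

lemma ProbabilityTheory.IndepFun.lintegral_comp_mul_comp {Ω α β : Type*} [MeasurableSpace Ω]
    [MeasurableSpace α] [MeasurableSpace β] {μ : Measure Ω} {X : Ω → α} {Y : Ω → β}
    (hXY : IndepFun X Y μ) (hX : Measurable X) (hY : Measurable Y) {f : α → ℝ≥0∞} {g : β → ℝ≥0∞}
    (hf : Measurable f) (hg : Measurable g) :
    ∫⁻ ω, f (X ω) * g (Y ω) ∂μ = (∫⁻ x, f x ∂μ.map X) * ∫⁻ y, g y ∂μ.map Y := by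
  rw [lintegral_map hf hX, lintegral_map hg hY]
  exact lintegral_mul_eq_lintegral_mul_lintegral_of_indepFun (hf.comp hX) (hg.comp hY)
    (hXY.comp hf hg)

lemma measure_le_eq_lintegral_exp_of_indepFun {Ω : Type*} [MeasurableSpace Ω] {P : Measure Ω}
    [IsFiniteMeasure P] {X U : Ω → ℝ} (hX : Measurable X) (hU : Measurable U) {r : ℝ}
    (hr : 0 < r) (hlawU : P.map U = expMeasure r) (hXU : IndepFun X U P)
    (hX0 : ∀ᵐ ω ∂P, 0 ≤ X ω) :
    P {ω | X ω ≤ U ω} = ∫⁻ ω, ENNReal.ofReal (exp (-(r * X ω))) ∂P := by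
  have hle : MeasurableSet {p : ℝ × ℝ | p.1 ≤ p.2} := measurableSet_le measurable_fst measurable_snd
  have hsurv : Measurable fun x => expMeasure r (Ici x) :=
    Antitone.measurable fun _ _ h => measure_mono (Ici_subset_Ici.mpr h)
  calc P {ω | X ω ≤ U ω} = (P.map X).prod (P.map U) {p | p.1 ≤ p.2} := by
        rw [← (indepFun_iff_map_prod_eq_prod_map_map hX.aemeasurable hU.aemeasurable).mp hXU,
          Measure.map_apply (hX.prodMk hU) hle]
        rfl
    _ = ∫⁻ ω, expMeasure r (Ici (X ω)) ∂P := by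
        rw [Measure.prod_apply hle, hlawU, ← lintegral_map hsurv hX]
        rfl
    _ = ∫⁻ ω, ENNReal.ofReal (exp (-(r * X ω))) ∂P :=
        lintegral_congr_ae (hX0.mono fun ω hω => expMeasure_Ici hr hω)

/-- **Survival probability of equations (A.2)–(A.3) in Appendix A.**
For independent exponential random variables `U, V, W` with means `β₁, β₂, β₃ > 0` and
constants `c₁ > 0`, `c₂ ≥ 0`, `c₃ ≥ 0`,
`P(U ≥ c₁·V² + c₂·W + c₃) = [β₁/(2β₂(β₁ + c₂β₃))]·√(πβ₁/c₁)·exp(β₁/(4β₂²c₁) − c₃/β₁)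
  · erfc((1/(2β₂))·√(β₁/c₁))`. -/
theorem survival_prob_exponential_vs_square_echo
    {Ω : Type*} [MeasurableSpace Ω] (P : Measure Ω) [IsProbabilityMeasure P]
    (U V W : Ω → ℝ) (hU : Measurable U) (hV : Measurable V) (hW : Measurable W)
    (β₁ β₂ β₃ : ℝ) (hβ₁ : 0 < β₁) (hβ₂ : 0 < β₂) (hβ₃ : 0 < β₃)
    (hlawU : Measure.map U P = expMeasure (1 / β₁))
    (hlawV : Measure.map V P = expMeasure (1 / β₂))
    (hlawW : Measure.map W P = expMeasure (1 / β₃))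
    (hindep : iIndepFun ![U, V, W] P)
    (c₁ c₂ c₃ : ℝ) (hc₁ : 0 < c₁) (hc₂ : 0 ≤ c₂) (hc₃ : 0 ≤ c₃) :
    P {ω | c₁ * (V ω) ^ 2 + c₂ * W ω + c₃ ≤ U ω}
      = ENNReal.ofReal (β₁ / (2 * β₂ * (β₁ + c₂ * β₃)) * Real.sqrt (π * β₁ / c₁)
          * Real.exp (β₁ / (4 * β₂ ^ 2 * c₁) - c₃ / β₁)
          * erfc (1 / (2 * β₂) * Real.sqrt (β₁ / c₁))) := by
  have hmeas : ∀ i, Measurable (![U, V, W] i) := fun i => by fin_cases i <;> assumption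
  have hVW_U : IndepFun (fun ω => (V ω, W ω)) U P := by
    simpa using hindep.indepFun_prodMk hmeas 1 2 0 (by decide) (by decide)
  have hXU : IndepFun (fun ω => c₁ * V ω ^ 2 + c₂ * W ω + c₃) U P :=
    hVW_U.comp (φ := fun p : ℝ × ℝ => c₁ * p.1 ^ 2 + c₂ * p.2 + c₃) (by fun_prop) measurable_id
  have hVW : IndepFun V W P := hindep.indepFun (i := 1) (j := 2) (by decide)
  have hX0 : ∀ᵐ ω ∂P, 0 ≤ c₁ * V ω ^ 2 + c₂ * W ω + c₃ :=
    (ae_of_ae_map hW.aemeasurable (hlawW ▸ ae_nonneg_expMeasure _)).mono fun ω hω => by positivity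
  have hsplit : ∀ ω, ENNReal.ofReal (exp (-(1 / β₁ * (c₁ * V ω ^ 2 + c₂ * W ω + c₃))))
      = ENNReal.ofReal (exp (-(c₁ / β₁ * V ω ^ 2))) * ENNReal.ofReal (exp (-(c₂ / β₁ * W ω)))
        * ENNReal.ofReal (exp (-(c₃ / β₁))) := fun ω => by
    rw [← ENNReal.ofReal_mul (exp_pos _).le, ← ENNReal.ofReal_mul (by positivity), ← exp_add,
      ← exp_add]
    ring_nf
  rw [measure_le_eq_lintegral_exp_of_indepFun (by fun_prop) hU (by positivity) hlawU hXU hX0]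
  simp_rw [hsplit]
  rw [lintegral_mul_const' _ _ ENNReal.ofReal_ne_top,
    hVW.lintegral_comp_mul_comp (f := fun v => ENNReal.ofReal (exp (-(c₁ / β₁ * v ^ 2))))
      (g := fun w => ENNReal.ofReal (exp (-(c₂ / β₁ * w)))) hV hW (by fun_prop) (by fun_prop),
    hlawV, hlawW, lintegral_exp_neg_mul_sq_expMeasure (by positivity) (by positivity),
    lintegral_exp_neg_mul_expMeasure (by positivity) (by positivity),
    ← ENNReal.ofReal_mul' (by positivity), ← ENNReal.ofReal_mul' (by positivity)]
  have harg : 1 / β₂ / (2 * √(c₁ / β₁)) = 1 / (2 * β₂) * √(β₁ / c₁) := by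
    rw [← inv_div β₁, sqrt_inv]
    field_simp
  have hexp : (1 / β₂) ^ 2 / (4 * (c₁ / β₁)) = β₁ / (4 * β₂ ^ 2 * c₁) := by
    field_simp
  congr 1
  rw [harg, hexp, div_div_eq_mul_div, sub_eq_add_neg, exp_add]
  field_simp
end

section
/- Let X and Y be independent exponential random variables with means β_X > 0 and β_Y > 0, let γ > 0, and let 0 < a_n < a_f with a_n + a_f = 1. Then for every w with 0 < w < a_f/a_n, P( min( a_f·γ·X/(a_n·γ·X + 1), a_f·γ·Y/(a_n·γ·Y + 1) ) > w ) = exp( −(1/β_X + 1/β_Y) · w/((a_f − a_n·w)·γ) ). -/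
open MeasureTheory ProbabilityTheory Real

lemma expMeasure_Iic' {r : ℝ} (hr : 0 < r) (t : ℝ) (ht : 0 ≤ t) :
    expMeasure r (Set.Iic t) = ENNReal.ofReal (1 - Real.exp (-(r * t))) := by
  rw [expMeasure, gammaMeasure, withDensity_apply _ measurableSet_Iic]
  have h : ∀ x, gammaPDF 1 r x = exponentialPDF r x := fun x => rfl
  simp_rw [h]
  rw [lintegral_exponentialPDF_eq_antiDeriv hr t, if_pos ht]

lemma expMeasure_Ioi' {r : ℝ} (hr : 0 < r) (t : ℝ) (ht : 0 ≤ t) :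
    expMeasure r (Set.Ioi t) = ENNReal.ofReal (Real.exp (-(r * t))) := by
  have hP : IsProbabilityMeasure (expMeasure r) := isProbabilityMeasure_expMeasure hr
  rw [← Set.compl_Iic, measure_compl measurableSet_Iic (measure_ne_top _ _), expMeasure_Iic' hr t ht,
    measure_univ]
  have h1 : Real.exp (-(r * t)) ≤ 1 := by
    rw [Real.exp_le_one_iff]
    nlinarith
  rw [ENNReal.ofReal_sub _ (by positivity), ENNReal.ofReal_one,
    ENNReal.sub_sub_cancel (by simp) (ENNReal.ofReal_le_one.mpr h1)]

lemma expMeasure_Iio_zero' {r : ℝ} : expMeasure r (Set.Iio 0) = 0 := by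
  rw [expMeasure, gammaMeasure, withDensity_apply _ measurableSet_Iio]
  exact lintegral_gammaPDF_of_nonpos le_rfl

/-- **Survival function of `W₂ = min(γ_SD_f^{D_f}, γ_SD_n^{D_f})`** (equation (28) of
Theorem 3): for independent exponentials `X, Y` with means `β_X, β_Y > 0`, SNR `γ > 0`
and NOMA power coefficients `0 < a_n < a_f`, `a_n + a_f = 1`, for `0 < w < a_f/a_n`,
`P(min(a_f γ X/(a_n γ X + 1), a_f γ Y/(a_n γ Y + 1)) > w)
  = exp(−(1/β_X + 1/β_Y)·w/((a_f − a_n w)γ))`. -/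
theorem survival_min_direct_sinr
    {Ω : Type*} [MeasurableSpace Ω] (P : Measure Ω) [IsProbabilityMeasure P]
    (X Y : Ω → ℝ) (hX : Measurable X) (hY : Measurable Y)
    (βX βY : ℝ) (hβX : 0 < βX) (hβY : 0 < βY)
    (hlawX : Measure.map X P = expMeasure (1 / βX))
    (hlawY : Measure.map Y P = expMeasure (1 / βY))
    (hindep : IndepFun X Y P)
    (γ an af : ℝ) (hγ : 0 < γ)
    (han : 0 < an) (hanf : an < af) (hsum : an + af = 1)
    (w : ℝ) (hw0 : 0 < w) (hw1 : w < af / an) :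
    P {ω | w < min (af * γ * X ω / (an * γ * X ω + 1))
                   (af * γ * Y ω / (an * γ * Y ω + 1))}
      = ENNReal.ofReal (Real.exp (-(1 / βX + 1 / βY) * (w / ((af - an * w) * γ)))) := by
  set t := w / ((af - an * w) * γ) with ht_def
  have hd : 0 < af - an * w := by
    have h := (lt_div_iff₀ han).mp hw1
    nlinarith
  have hdγ : 0 < (af - an * w) * γ := mul_pos hd hγ
  have ht0 : 0 < t := div_pos hw0 hdγ
  have key : ∀ x : ℝ, 0 ≤ x → (w < af * γ * x / (an * γ * x + 1) ↔ t < x) := by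
    intro x hx
    have hden : 0 < an * γ * x + 1 := by positivity
    rw [lt_div_iff₀ hden, ht_def, div_lt_iff₀ hdγ]
    constructor <;> intro h <;> nlinarith
  -- a.e. nonnegativity
  have h0X : ∀ᵐ ω ∂P, 0 ≤ X ω := by
    rw [ae_iff]
    have : {ω | ¬ 0 ≤ X ω} = X ⁻¹' Set.Iio 0 := by ext ω; simp [not_le]
    rw [this, ← Measure.map_apply hX measurableSet_Iio, hlawX, expMeasure_Iio_zero']
  have h0Y : ∀ᵐ ω ∂P, 0 ≤ Y ω := by
    rw [ae_iff]
    have : {ω | ¬ 0 ≤ Y ω} = Y ⁻¹' Set.Iio 0 := by ext ω; simp [not_le]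
    rw [this, ← Measure.map_apply hY measurableSet_Iio, hlawY, expMeasure_Iio_zero']
  have hae : {ω | w < min (af * γ * X ω / (an * γ * X ω + 1))
                   (af * γ * Y ω / (an * γ * Y ω + 1))}
      =ᵐ[P] ((X ⁻¹' Set.Ioi t ∩ Y ⁻¹' Set.Ioi t : Set Ω)) := by
    filter_upwards [h0X, h0Y] with ω hx hy
    have : (w < min (af * γ * X ω / (an * γ * X ω + 1))
        (af * γ * Y ω / (an * γ * Y ω + 1))) ↔ (t < X ω ∧ t < Y ω) := by
      rw [lt_min_iff, key _ hx, key _ hy]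
    simp only [eq_iff_iff, Set.mem_setOf_eq, Set.mem_inter_iff, Set.mem_preimage,
      Set.mem_Ioi]
    exact this
  rw [measure_congr hae,
    hindep.measure_inter_preimage_eq_mul _ _ measurableSet_Ioi measurableSet_Ioi,
    ← Measure.map_apply hX measurableSet_Ioi, ← Measure.map_apply hY measurableSet_Ioi,
    hlawX, hlawY, expMeasure_Ioi' (by positivity) t ht0.le,
    expMeasure_Ioi' (by positivity) t ht0.le,
    ← ENNReal.ofReal_mul (by positivity), ← Real.exp_add]
  congr 1
  ring
end

section
/- Let γ_f > 0 and γ_n > 0. On the set D = { a ∈ ℝ : 0 < a and a·(1 + γ_f) < 1 } define θ₁*(a) = γ_f/(1 − a·(1 + γ_f)) and θ₂*(a) = γ_n/a, and let a† = γ_n/(γ_f + γ_n + γ_f·γ_n). Then: (i) a† ∈ D; (ii) θ₁*(a†) = θ₂*(a†); (iii) max(θ₁*(a), θ₂*(a)) = θ₂*(a) for all a ∈ D with a ≤ a†, and max(θ₁*(a), θ₂*(a)) = θ₁*(a) for all a ∈ D with a ≥ a†; and (iv) for every a ∈ D, max(θ₁*(a), θ₂*(a)) ≥ max(θ₁*(a†),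 θ₂*(a†)), i.e., a† is a global minimizer of a ↦ max(θ₁*(a), θ₂*(a)) on D. -/
/-! θ₁* is increasing and θ₂* is decreasing on `D`, and both equal `γ_f + γ_n + γ_f γ_n` at `a†`.
For any increasing `f` and decreasing `g` that cross at `c`, `max f g` follows `g` left of `c`, `f`
right of `c`, and on each side is at least the common value `f c = g c`. -/

section Crossing

variable {α β : Type*} [LinearOrder β] {f g : α → β} {s : Set α} {a c : α}

theorem max_eq_right_of_le_of_crossing [Preorder α] (hf : MonotoneOn f s) (hg : AntitoneOn g s)
    (hc : c ∈ s) (hfg : f c = g c) (ha : a ∈ s) (hac : a ≤ c) : max (f a) (g a) = g a :=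
  max_eq_right <| (hf ha hc hac).trans <| hfg.trans_le (hg ha hc hac)

theorem max_eq_left_of_le_of_crossing [Preorder α] (hf : MonotoneOn f s) (hg : AntitoneOn g s)
    (hc : c ∈ s) (hfg : f c = g c) (ha : a ∈ s) (hca : c ≤ a) : max (f a) (g a) = f a :=
  max_eq_left <| (hg hc ha hca).trans <| hfg.symm.trans_le (hf hc ha hca)

theorem isMinOn_max_of_crossing [LinearOrder α] (hf : MonotoneOn f s) (hg : AntitoneOn g s)
    (hc : c ∈ s) (hfg : f c = g c) : IsMinOn (fun x => max (f x) (g x)) s c := by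
  refine isMinOn_iff.mpr fun a ha => ?_
  rw [hfg, max_self]
  rcases le_total a c with hac | hca
  · exact (hg ha hc hac).trans (le_max_right _ _)
  · exact (hfg.symm.trans_le (hf hc ha hca)).trans (le_max_left _ _)

end Crossing

theorem antitoneOn_div_left_Ioi {p : ℝ} (hp : 0 ≤ p) :
    AntitoneOn (fun x : ℝ => p / x) (Set.Ioi 0) :=
  fun _ hx _ _ hxy => div_le_div_of_nonneg_left hp hx hxy

theorem monotoneOn_div_one_sub_mul {p k : ℝ} (hp : 0 ≤ p) (hk : 0 ≤ k) :
    MonotoneOn (fun x : ℝ => p / (1 - x * k)) {x | x * k < 1} := fun x _ y hy hxy =>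
  div_le_div_of_nonneg_left hp (sub_pos.mpr hy) (by nlinarith)

/-- **Optimal power allocation in the sensing-centric design (equations (47)–(48)).**
On `D = {a : 0 < a ∧ a(1+γ_f) < 1}`, with `θ₁*(a) = γ_f/(1 − a(1+γ_f))`,
`θ₂*(a) = γ_n/a` and `a† = γ_n/(γ_f + γ_n + γ_f γ_n)`: (i) `a† ∈ D`;
(ii) `θ₁*(a†) = θ₂*(a†)`; (iii) `max(θ₁*,θ₂*) = θ₂*` left of `a†` and `= θ₁*` right
of `a†`; (iv) `a†` globally minimizes `max(θ₁*,θ₂*)` on `D`. -/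
theorem optimal_power_allocation_scd (γf γn : ℝ) (hγf : 0 < γf) (hγn : 0 < γn) :
    let D : Set ℝ := {a : ℝ | 0 < a ∧ a * (1 + γf) < 1}
    let θ₁ : ℝ → ℝ := fun a => γf / (1 - a * (1 + γf))
    let θ₂ : ℝ → ℝ := fun a => γn / a
    let adag : ℝ := γn / (γf + γn + γf * γn)
    adag ∈ D
    ∧ θ₁ adag = θ₂ adag
    ∧ (∀ a ∈ D, a ≤ adag → max (θ₁ a) (θ₂ a) = θ₂ a)
    ∧ (∀ a ∈ D, adag ≤ a → max (θ₁ a) (θ₂ a) = θ₁ a)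
    ∧ (∀ a ∈ D, max (θ₁ adag) (θ₂ adag) ≤ max (θ₁ a) (θ₂ a)) := by
  intro D θ₁ θ₂ adag
  have hS : 0 < γf + γn + γf * γn := by positivity
  have hadag : adag ∈ D := by
    refine ⟨div_pos hγn hS, ?_⟩
    rw [div_mul_eq_mul_div, div_lt_one hS]
    nlinarith
  have hθ₁ : MonotoneOn θ₁ D :=
    (monotoneOn_div_one_sub_mul hγf.le (by linarith)).mono fun _ ha => ha.2
  have hθ₂ : AntitoneOn θ₂ D := (antitoneOn_div_left_Ioi hγn.le).mono fun _ ha => ha.1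
  have hcross : θ₁ adag = θ₂ adag := by
    have hden : 1 - adag * (1 + γf) = γf / (γf + γn + γf * γn) := by
      simp only [adag]
      field_simp
      ring
    simp only [θ₁, θ₂, adag, hden]
    field_simp
  exact ⟨hadag, hcross,
    fun _ ha hle => max_eq_right_of_le_of_crossing hθ₁ hθ₂ hadag hcross ha hle,
    fun _ ha hle => max_eq_left_of_le_of_crossing hθ₁ hθ₂ hadag hcross ha hle,
    isMinOn_iff.mp (isMinOn_max_of_crossing hθ₁ hθ₂ hadag hcross)⟩
end

section
/- Let ρ, l₂, c₂, c₃, N be positive real constants. Then the function f : (0, ∞) → ℝ defined by f(a) = −ln(a·ρ + l₂) − ln(a) + ln(a·c₃ + N) + min( ln(a·ρ + l₂) − ln(l₂), ln(a·c₂ + N) − ln(N) ) is antitone (nonincreasing) on (0, ∞). -/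
/-!
Writing `α = ρ / l₂` and `γ = c₂ / N`, the two arguments of the minimum are `log (1 + α a)` and
`log (1 + γ a)`, so the minimum is `log (1 + min α γ · a)` and, up to the constant `-log l₂`,
`f a = log ((c₃ a + N) / a) + log ((1 + min α γ · a) / (1 + α a))`.
Both quotients are Möbius maps `(p a + q) / (r a + s)` with `p s ≤ q r`, hence nonincreasing on
`(0, ∞)`.
-/

open Real Set

lemma antitoneOn_log_mul_add_sub_log_mul_add {p q r s : ℝ} (hp : 0 ≤ p) (hq : 0 < q)
    (hr : 0 < r) (hs : 0 ≤ s) (h : p * s ≤ q * r) :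
    AntitoneOn (fun a => log (a * p + q) - log (a * r + s)) (Ioi 0) := by
  intro x (hx : 0 < x) y (hy : 0 < y) hxy
  rw [sub_le_sub_iff, ← log_mul (by positivity) (by positivity),
    ← log_mul (by positivity) (by positivity)]
  exact log_le_log (by positivity) (by nlinarith [mul_le_mul_of_nonneg_right h (sub_nonneg.2 hxy)])

lemma log_mul_add_sub_log {a b c : ℝ} (h : a * b + c ≠ 0) (hc : c ≠ 0) :
    log (a * b + c) - log c = log (a * (b / c) + 1) := by
  rw [← log_div h hc]
  congr 1
  field_simp

lemma log_mul_min_add_one {a α γ : ℝ} (ha : 0 ≤ a) (hα : 0 ≤ α) (hγ : 0 ≤ γ) :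
    log (a * min α γ + 1) = min (log (a * α + 1)) (log (a * γ + 1)) := by
  have hmono : MonotoneOn (fun x => log (a * x + 1)) (Ici 0) :=
    fun x (hx : 0 ≤ x) y _ hxy => log_le_log (by positivity) (by gcongr)
  exact hmono.map_min hα hγ

/-- **Monotonicity of the high-SNR sum rate in the near-device power coefficient**
(equations (62)–(67) of the communication-centric design): for positive constants
`ρ, l₂, c₂, c₃, N`, the function
`f(a) = −ln(aρ+l₂) − ln a + ln(ac₃+N) + min(ln(aρ+l₂) − ln l₂, ln(ac₂+N) − ln N)`
is antitone (nonincreasing) on `(0,∞)`. -/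
theorem sum_rate_antitone (ρ l₂ c₂ c₃ N : ℝ)
    (hρ : 0 < ρ) (hl₂ : 0 < l₂) (hc₂ : 0 < c₂) (hc₃ : 0 < c₃) (hN : 0 < N) :
    AntitoneOn (fun a : ℝ =>
        -Real.log (a * ρ + l₂) - Real.log a + Real.log (a * c₃ + N)
          + min (Real.log (a * ρ + l₂) - Real.log l₂)
                (Real.log (a * c₂ + N) - Real.log N))
      (Set.Ioi (0 : ℝ)) := by
  have hα : 0 < ρ / l₂ := by positivity
  have hγ : 0 < c₂ / N := by positivity
  have hc₃_part := antitoneOn_log_mul_add_sub_log_mul_add hc₃.le hN one_pos le_rfl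
    (by simpa using hN.le)
  have hmin_part := antitoneOn_log_mul_add_sub_log_mul_add (le_min hα.le hγ.le) one_pos hα
    zero_le_one (by simp)
  refine ((hc₃_part.add hmin_part).add_const (-log l₂)).congr fun a (ha : 0 < a) => ?_
  have hρ_part := log_mul_add_sub_log (a := a) (by positivity) hl₂.ne'
  have hc₂_part := log_mul_add_sub_log (a := a) (b := c₂) (by positivity) hN.ne'
  simp only [hρ_part, hc₂_part, ← log_mul_min_add_one ha.le hα.le hγ.le, mul_one, add_zero]
  linarith
end
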